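/- With 𝓛 and V as above (V = (x²+y²)² + z², 𝓛 = X² + Y² − λD + q_x X + q_y Y with bounded smooth q's and λ > 0), for every integer k ≥ 1 there exist c_k > 0 and C_k > 0 such that 𝓛(V^k)(p) ≤ −c_k V^k(p) + C_k for all p ∈ ℝ³; moreover 𝓛(V^k)(p) + c_k V^k(p) → −∞ as ‖p‖ → ∞. -/

import Mathlib

/-- Partial derivative in the `i`-th coordinate direction on ℝ³. -/
noncomputable def pd (i : Fin 3) (f : (Fin 3 → ℝ) → ℝ) : (Fin 3 → ℝ) → ℝ :=
  fun p => fderiv ℝ f p (Pi.single i 1)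

/-- The generator `𝓛 = X² + Y² − λD + q_x X + q_y Y` on ℝ³, written out in
coordinates. -/
noncomputable def Lop (qx qy : (Fin 3 → ℝ) → ℝ) (lam : ℝ)
    (f : (Fin 3 → ℝ) → ℝ) : (Fin 3 → ℝ) → ℝ :=
  fun p =>
    pd 0 (pd 0 f) p + pd 1 (pd 1 f) p + (p 0 ^ 2 + p 1 ^ 2) / 4 * pd 2 (pd 2 f) p
      - p 1 * pd 2 (pd 0 f) p + p 0 * pd 2 (pd 1 f) p
      + (qx p - lam * p 0) * pd 0 f p + (qy p - lam * p 1) * pd 1 f p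
      + (-(2 * lam * p 2) + (qy p * p 0 - qx p * p 1) / 2) * pd 2 f p

/-- The Lyapunov function `V(x,y,z) = (x² + y²)² + z²`. -/
noncomputable def Vfun : (Fin 3 → ℝ) → ℝ :=
  fun p => (p 0 ^ 2 + p 1 ^ 2) ^ 2 + p 2 ^ 2

private lemma HasFDerivAt.pow_fin3 {f : (Fin 3 → ℝ) → ℝ} {f' : (Fin 3 → ℝ) →L[ℝ] ℝ} {x}
    (h : HasFDerivAt f f' x) (n : ℕ) :
    HasFDerivAt (fun x => f x ^ n) (((n : ℝ) * f x ^ (n - 1)) • f') x :=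
  (hasDerivAt_pow n (f x)).comp_hasFDerivAt x h

private lemma pd_eval {f : (Fin 3 → ℝ) → ℝ} {L : (Fin 3 → ℝ) →L[ℝ] ℝ} {p} (h : HasFDerivAt f L p)
    (i : Fin 3) : pd i f p = L (Pi.single i 1) := by rw [pd, h.fderiv]

section derivs
variable (m : ℕ)

private lemma pdf0 : pd 0 (fun q => Vfun q ^ (m+1))
    = fun p => ((m:ℝ)+1) * Vfun p ^ m * (4 * p 0 * (p 0 ^ 2 + p 1 ^ 2)) := by
  funext p
  have h0 := hasFDerivAt_apply (𝕜 := ℝ) 0 p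
  have h1 := hasFDerivAt_apply (𝕜 := ℝ) 1 p
  have h2 := hasFDerivAt_apply (𝕜 := ℝ) 2 p
  have hV : HasFDerivAt Vfun _ p := ((h0.pow_fin3 2).add (h1.pow_fin3 2)).pow_fin3 2 |>.add (h2.pow_fin3 2)
  rw [pd_eval (hV.pow_fin3 (m+1))]
  simp only [ContinuousLinearMap.add_apply, ContinuousLinearMap.smul_apply,
    ContinuousLinearMap.proj_apply, Pi.single_apply, Nat.add_sub_cancel, Fin.reduceEq,
    reduceIte, smul_eq_mul, Pi.add_apply]
  push_cast; ring

private lemma pdf1 : pd 1 (fun q => Vfun q ^ (m+1))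
    = fun p => ((m:ℝ)+1) * Vfun p ^ m * (4 * p 1 * (p 0 ^ 2 + p 1 ^ 2)) := by
  funext p
  have h0 := hasFDerivAt_apply (𝕜 := ℝ) 0 p
  have h1 := hasFDerivAt_apply (𝕜 := ℝ) 1 p
  have h2 := hasFDerivAt_apply (𝕜 := ℝ) 2 p
  have hV : HasFDerivAt Vfun _ p := ((h0.pow_fin3 2).add (h1.pow_fin3 2)).pow_fin3 2 |>.add (h2.pow_fin3 2)
  rw [pd_eval (hV.pow_fin3 (m+1))]
  simp only [ContinuousLinearMap.add_apply, ContinuousLinearMap.smul_apply,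
    ContinuousLinearMap.proj_apply, Pi.single_apply, Nat.add_sub_cancel, Fin.reduceEq,
    reduceIte, smul_eq_mul, Pi.add_apply]
  push_cast; ring

private lemma pdf2 : pd 2 (fun q => Vfun q ^ (m+1))
    = fun p => ((m:ℝ)+1) * Vfun p ^ m * (2 * p 2) := by
  funext p
  have h0 := hasFDerivAt_apply (𝕜 := ℝ) 0 p
  have h1 := hasFDerivAt_apply (𝕜 := ℝ) 1 p
  have h2 := hasFDerivAt_apply (𝕜 := ℝ) 2 p
  have hV : HasFDerivAt Vfun _ p := ((h0.pow_fin3 2).add (h1.pow_fin3 2)).pow_fin3 2 |>.add (h2.pow_fin3 2)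
  rw [pd_eval (hV.pow_fin3 (m+1))]
  simp only [ContinuousLinearMap.add_apply, ContinuousLinearMap.smul_apply,
    ContinuousLinearMap.proj_apply, Pi.single_apply, Nat.add_sub_cancel, Fin.reduceEq,
    reduceIte, smul_eq_mul]
  push_cast; ring

private lemma d00 :
    pd 0 (fun p => ((m:ℝ)+1) * Vfun p ^ m * (4 * p 0 * (p 0 ^ 2 + p 1 ^ 2)))
    = fun p => ((m:ℝ)+1) * Vfun p ^ m * (4*(p 0^2+p 1^2) + 8*p 0^2)
      + ((m:ℝ)+1) * ((m:ℝ) * Vfun p ^ (m-1)) *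
          ((4*p 0*(p 0^2+p 1^2)) * (4*p 0*(p 0^2+p 1^2))) := by
  funext p
  have h0 := hasFDerivAt_apply (𝕜 := ℝ) 0 p
  have h1 := hasFDerivAt_apply (𝕜 := ℝ) 1 p
  have hV : HasFDerivAt Vfun _ p := ((h0.pow_fin3 2).add (h1.pow_fin3 2)).pow_fin3 2
    |>.add ((hasFDerivAt_apply (𝕜 := ℝ) 2 p).pow_fin3 2)
  have hg : HasFDerivAt
      (fun p : Fin 3 → ℝ => ((m:ℝ)+1) * Vfun p ^ m * (4 * p 0 * (p 0 ^ 2 + p 1 ^ 2))) _ p :=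
    ((hV.pow_fin3 m).const_mul ((m:ℝ)+1)).mul ((h0.const_mul 4).mul ((h0.pow_fin3 2).add (h1.pow_fin3 2)))
  rw [pd_eval hg]
  simp only [ContinuousLinearMap.add_apply, ContinuousLinearMap.smul_apply,
    ContinuousLinearMap.proj_apply, Pi.single_apply, Fin.reduceEq, reduceIte, smul_eq_mul, Pi.add_apply]
  push_cast; ring

private lemma d11 :
    pd 1 (fun p => ((m:ℝ)+1) * Vfun p ^ m * (4 * p 1 * (p 0 ^ 2 + p 1 ^ 2)))
    = fun p => ((m:ℝ)+1) * Vfun p ^ m * (4*(p 0^2+p 1^2) + 8*p 1^2)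
      + ((m:ℝ)+1) * ((m:ℝ) * Vfun p ^ (m-1)) *
          ((4*p 1*(p 0^2+p 1^2)) * (4*p 1*(p 0^2+p 1^2))) := by
  funext p
  have h0 := hasFDerivAt_apply (𝕜 := ℝ) 0 p
  have h1 := hasFDerivAt_apply (𝕜 := ℝ) 1 p
  have hV : HasFDerivAt Vfun _ p := ((h0.pow_fin3 2).add (h1.pow_fin3 2)).pow_fin3 2
    |>.add ((hasFDerivAt_apply (𝕜 := ℝ) 2 p).pow_fin3 2)
  have hg : HasFDerivAt
      (fun p : Fin 3 → ℝ => ((m:ℝ)+1) * Vfun p ^ m * (4 * p 1 * (p 0 ^ 2 + p 1 ^ 2))) _ p :=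
    ((hV.pow_fin3 m).const_mul ((m:ℝ)+1)).mul ((h1.const_mul 4).mul ((h0.pow_fin3 2).add (h1.pow_fin3 2)))
  rw [pd_eval hg]
  simp only [ContinuousLinearMap.add_apply, ContinuousLinearMap.smul_apply,
    ContinuousLinearMap.proj_apply, Pi.single_apply, Fin.reduceEq, reduceIte, smul_eq_mul, Pi.add_apply]
  push_cast; ring

private lemma d22 :
    pd 2 (fun p => ((m:ℝ)+1) * Vfun p ^ m * (2 * p 2))
    = fun p => ((m:ℝ)+1) * Vfun p ^ m * 2
      + ((m:ℝ)+1) * ((m:ℝ) * Vfun p ^ (m-1)) * ((2*p 2) * (2*p 2)) := by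
  funext p
  have h0 := hasFDerivAt_apply (𝕜 := ℝ) 0 p
  have h1 := hasFDerivAt_apply (𝕜 := ℝ) 1 p
  have h2 := hasFDerivAt_apply (𝕜 := ℝ) 2 p
  have hV : HasFDerivAt Vfun _ p := ((h0.pow_fin3 2).add (h1.pow_fin3 2)).pow_fin3 2 |>.add (h2.pow_fin3 2)
  have hg : HasFDerivAt
      (fun p : Fin 3 → ℝ => ((m:ℝ)+1) * Vfun p ^ m * (2 * p 2)) _ p :=
    ((hV.pow_fin3 m).const_mul ((m:ℝ)+1)).mul (h2.const_mul 2)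
  rw [pd_eval hg]
  simp only [ContinuousLinearMap.add_apply, ContinuousLinearMap.smul_apply,
    ContinuousLinearMap.proj_apply, Pi.single_apply, Fin.reduceEq, reduceIte, smul_eq_mul]
  push_cast; ring

private lemma d20 :
    pd 2 (fun p => ((m:ℝ)+1) * Vfun p ^ m * (4 * p 0 * (p 0 ^ 2 + p 1 ^ 2)))
    = fun p => ((m:ℝ)+1) * ((m:ℝ) * Vfun p ^ (m-1)) *
        ((2*p 2) * (4*p 0*(p 0^2+p 1^2))) := by
  funext p
  have h0 := hasFDerivAt_apply (𝕜 := ℝ) 0 p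
  have h1 := hasFDerivAt_apply (𝕜 := ℝ) 1 p
  have h2 := hasFDerivAt_apply (𝕜 := ℝ) 2 p
  have hV : HasFDerivAt Vfun _ p := ((h0.pow_fin3 2).add (h1.pow_fin3 2)).pow_fin3 2 |>.add (h2.pow_fin3 2)
  have hg : HasFDerivAt
      (fun p : Fin 3 → ℝ => ((m:ℝ)+1) * Vfun p ^ m * (4 * p 0 * (p 0 ^ 2 + p 1 ^ 2))) _ p :=
    ((hV.pow_fin3 m).const_mul ((m:ℝ)+1)).mul ((h0.const_mul 4).mul ((h0.pow_fin3 2).add (h1.pow_fin3 2)))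
  rw [pd_eval hg]
  simp only [ContinuousLinearMap.add_apply, ContinuousLinearMap.smul_apply,
    ContinuousLinearMap.proj_apply, Pi.single_apply, Fin.reduceEq, reduceIte, smul_eq_mul]
  push_cast; ring

private lemma d21 :
    pd 2 (fun p => ((m:ℝ)+1) * Vfun p ^ m * (4 * p 1 * (p 0 ^ 2 + p 1 ^ 2)))
    = fun p => ((m:ℝ)+1) * ((m:ℝ) * Vfun p ^ (m-1)) *
        ((2*p 2) * (4*p 1*(p 0^2+p 1^2))) := by
  funext p
  have h0 := hasFDerivAt_apply (𝕜 := ℝ) 0 p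
  have h1 := hasFDerivAt_apply (𝕜 := ℝ) 1 p
  have h2 := hasFDerivAt_apply (𝕜 := ℝ) 2 p
  have hV : HasFDerivAt Vfun _ p := ((h0.pow_fin3 2).add (h1.pow_fin3 2)).pow_fin3 2 |>.add (h2.pow_fin3 2)
  have hg : HasFDerivAt
      (fun p : Fin 3 → ℝ => ((m:ℝ)+1) * Vfun p ^ m * (4 * p 1 * (p 0 ^ 2 + p 1 ^ 2))) _ p :=
    ((hV.pow_fin3 m).const_mul ((m:ℝ)+1)).mul ((h1.const_mul 4).mul ((h0.pow_fin3 2).add (h1.pow_fin3 2)))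
  rw [pd_eval hg]
  simp only [ContinuousLinearMap.add_apply, ContinuousLinearMap.smul_apply,
    ContinuousLinearMap.proj_apply, Pi.single_apply, Fin.reduceEq, reduceIte, smul_eq_mul]
  push_cast; ring

private lemma Lop_formula (qx qy : (Fin 3 → ℝ) → ℝ) (lam : ℝ) (p : Fin 3 → ℝ) :
    Lop qx qy lam (fun q => Vfun q ^ (m+1)) p =
      ((m:ℝ)+1) * Vfun p ^ m *
        ((33/2) * (p 0^2+p 1^2) + 4*(p 0^2+p 1^2)*(p 0*qx p + p 1*qy p)
          + p 2*(p 0*qy p - p 1*qx p) - 4*lam*((p 0^2+p 1^2)^2 + p 2^2))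
      + ((m:ℝ)+1) * ((m:ℝ) * Vfun p ^ (m-1)) *
          (16*(p 0^2+p 1^2)^3 + (p 0^2+p 1^2)*p 2^2) := by
  simp only [Lop, pdf0, pdf1, pdf2, d00, d11, d22, d20, d21]
  have hV : Vfun p = (p 0^2+p 1^2)^2 + p 2^2 := rfl
  rw [hV]; ring

end derivs

private lemma step_lemma (a eps : ℝ) (ha : 0 ≤ a) (he : 0 < eps) (n : ℕ)
    (s : ℝ) (hs : 0 ≤ s) : a * s ^ n ≤ eps * s ^ (n+1) + a * (a/eps) ^ n := by
  rcases le_or_gt s (a/eps) with h | h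
  · have h1 : s ^ n ≤ (a/eps) ^ n := pow_le_pow_left₀ hs h n
    have h2 : 0 ≤ eps * s ^ (n+1) := mul_nonneg he.le (pow_nonneg hs _)
    nlinarith [mul_le_mul_of_nonneg_left h1 ha]
  · have h1 : a ≤ eps * s := by rw [div_lt_iff₀ he] at h; linarith
    have h2 : a * s ^ n ≤ (eps * s) * s ^ n :=
      mul_le_mul_of_nonneg_right h1 (pow_nonneg hs n)
    have h3 : 0 ≤ a * (a/eps) ^ n := mul_nonneg ha (pow_nonneg (div_nonneg ha he.le) n)
    calc a * s ^ n ≤ (eps * s) * s ^ n := h2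
      _ = eps * s ^ (n+1) := by ring
      _ ≤ eps * s ^ (n+1) + a * (a/eps) ^ n := by linarith

private lemma g2_helper (m : ℕ) (s r2 zz : ℝ) (hs : 0 ≤ s) (hr0 : 0 ≤ r2)
    (hr : r2 ≤ s^2) (hzz : zz ≤ s^4) (hz0 : 0 ≤ zz) :
    (m:ℝ) * (s^4)^(m-1) * (16*r2^3 + r2*zz) ≤ 17*(m:ℝ)*s^(4*m+2) := by
  cases m with
  | zero => simp
  | succ mm =>
    have h1 : r2^3 ≤ (s^2)^3 := pow_le_pow_left₀ hr0 hr 3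
    have h2 : r2*zz ≤ s^2*s^4 := mul_le_mul hr hzz hz0 (by positivity)
    have h3 : 16*r2^3 + r2*zz ≤ 17*s^6 := by nlinarith
    have h4 : 0 ≤ (16*r2^3 + r2*zz) := by positivity
    have h5 : ((mm+1:ℕ):ℝ) * (s^4)^((mm+1)-1) * (16*r2^3 + r2*zz)
        ≤ ((mm+1:ℕ):ℝ) * (s^4)^mm * (17*s^6) := by
      rw [Nat.add_sub_cancel]
      have := mul_le_mul_of_nonneg_left h3
        (by positivity : (0:ℝ) ≤ ((mm+1:ℕ):ℝ) * (s^4)^mm)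
      linarith [this]
    refine h5.trans (le_of_eq ?_)
    rw [← pow_mul]
    push_cast
    rw [show 4*(mm+1)+2 = 4*mm+6 by omega, pow_add]
    ring

private lemma norm_le_sum_abs (p : Fin 3 → ℝ) : ‖p‖ ≤ |p 0| + |p 1| + |p 2| := by
  refine (pi_norm_le_iff_of_nonneg (by positivity)).2 ?_
  intro i
  have a0 := abs_nonneg (p 0); have a1 := abs_nonneg (p 1); have a2 := abs_nonneg (p 2)
  fin_cases i
  · show ‖p 0‖ ≤ _
    rw [Real.norm_eq_abs]; linarith
  · show ‖p 1‖ ≤ _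
    rw [Real.norm_eq_abs]; linarith
  · show ‖p 2‖ ≤ _
    rw [Real.norm_eq_abs]; linarith

private lemma Vfun_lower (p : Fin 3 → ℝ) : (2*‖p‖^2 - 3)/9 ≤ Vfun p := by
  have h1 : ‖p‖ ≤ |p 0| + |p 1| + |p 2| := norm_le_sum_abs p
  have h2 : ‖p‖^2 ≤ (|p 0| + |p 1| + |p 2|)^2 :=
    pow_le_pow_left₀ (norm_nonneg p) h1 2
  have h3 : (|p 0| + |p 1| + |p 2|)^2 ≤ 3*(p 0^2 + p 1^2 + p 2^2) := by
    have e0 : |p 0|^2 = p 0^2 := sq_abs _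
    have e1 : |p 1|^2 = p 1^2 := sq_abs _
    have e2 : |p 2|^2 = p 2^2 := sq_abs _
    nlinarith [sq_nonneg (|p 0| - |p 1|), sq_nonneg (|p 0| - |p 2|), sq_nonneg (|p 1| - |p 2|)]
  have h4 : p 0^2 + p 1^2 + p 2^2 ≤ (1 + 3*Vfun p)/2 := by
    have hV : Vfun p = (p 0^2+p 1^2)^2 + p 2^2 := rfl
    nlinarith [sq_nonneg (p 0^2 + p 1^2 - 1), sq_nonneg (p 2)]
  nlinarith

set_option maxHeartbeats 2000000 in
private lemma key_bound (qx qy : (Fin 3 → ℝ) → ℝ) (C : ℝ)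
    (hqx_bdd : ∀ p, |qx p| ≤ C) (hqy_bdd : ∀ p, |qy p| ≤ C)
    (lam : ℝ) (hlam : 0 < lam) (m : ℕ) :
    ∃ B : ℝ, 0 ≤ B ∧ ∀ p : Fin 3 → ℝ,
      Lop qx qy lam (fun q => Vfun q ^ (m+1)) p
        + (2*lam*((m:ℝ)+1)) * Vfun p ^ (m+1)
      ≤ -(lam*((m:ℝ)+1)) * Vfun p ^ (m+1) + B := by
  have hC0 : 0 ≤ C := (abs_nonneg _).trans (hqx_bdd 0)
  set K : ℝ := (m:ℝ)+1 with hKdef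
  have hK0 : 0 < K := by positivity
  set eps : ℝ := lam*K/2 with hepsdef
  have heps : 0 < eps := by positivity
  set a2 : ℝ := K*(33/2+17*(m:ℝ)) with ha2def
  have ha2 : 0 ≤ a2 := by positivity
  set a1 : ℝ := 10*C*K + eps with ha1def
  have ha1 : 0 ≤ a1 := by positivity
  refine ⟨a2*(a2/eps)^(4*m+2) + a1*(a1/(lam*K))^(4*m+3), by positivity, fun p => ?_⟩
  clear_value K eps a2 a1
  rw [Lop_formula, ← hKdef]
  set x := p 0 with hxd
  set y := p 1 with hyd
  set z := p 2 with hzd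
  have hVeq : Vfun p = (x^2+y^2)^2 + z^2 := rfl
  set V := Vfun p with hVdef
  have hV0 : 0 ≤ V := by rw [hVeq]; positivity
  set s := Real.sqrt (Real.sqrt V) with hsdef
  have hs0 : 0 ≤ s := Real.sqrt_nonneg _
  have hs2 : s^2 = Real.sqrt V := Real.sq_sqrt (Real.sqrt_nonneg V)
  have hs4 : s^4 = V := by
    have h' : s^4 = (s^2)^2 := by ring
    rw [h', hs2, Real.sq_sqrt hV0]
  have hr2 : x^2+y^2 ≤ s^2 := by
    have h1 : (x^2+y^2)^2 ≤ V := by rw [hVeq]; nlinarith [sq_nonneg z]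
    have h2 := Real.sqrt_le_sqrt h1
    rw [Real.sqrt_sq (by positivity : (0:ℝ) ≤ x^2+y^2)] at h2
    rw [hs2]; exact h2
  have hx : |x| ≤ s := by
    have h1 : x^2 ≤ s^2 := by nlinarith [sq_nonneg y]
    have h2 := Real.sqrt_le_sqrt h1
    rwa [Real.sqrt_sq_eq_abs, Real.sqrt_sq hs0] at h2
  have hy : |y| ≤ s := by
    have h1 : y^2 ≤ s^2 := by nlinarith [sq_nonneg x]
    have h2 := Real.sqrt_le_sqrt h1
    rwa [Real.sqrt_sq_eq_abs, Real.sqrt_sq hs0] at h2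
  have hz4 : z^2 ≤ s^4 := by
    rw [hs4, hVeq]; nlinarith [sq_nonneg (x^2+y^2)]
  have hz : |z| ≤ s^2 := by
    have h1 : z^2 ≤ (s^2)^2 := by rw [show ((s:ℝ)^2)^2 = s^4 by ring]; exact hz4
    have h2 := Real.sqrt_le_sqrt h1
    rwa [Real.sqrt_sq_eq_abs, Real.sqrt_sq (by positivity)] at h2
  -- bounds on mixed q-terms
  have habs1 : |x*qx p + y*qy p| ≤ 2*(s*C) := by
    calc |x*qx p + y*qy p| ≤ |x*qx p| + |y*qy p| := abs_add_le _ _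
      _ = |x| * |qx p| + |y| * |qy p| := by rw [abs_mul, abs_mul]
      _ ≤ s*C + s*C := add_le_add
          (mul_le_mul hx (hqx_bdd p) (abs_nonneg _) hs0)
          (mul_le_mul hy (hqy_bdd p) (abs_nonneg _) hs0)
      _ = 2*(s*C) := by ring
  have habs2 : |x*qy p - y*qx p| ≤ 2*(s*C) := by
    calc |x*qy p - y*qx p| ≤ |x*qy p| + |y*qx p| := abs_sub _ _
      _ = |x| * |qy p| + |y| * |qx p| := by rw [abs_mul, abs_mul]
      _ ≤ s*C + s*C := add_le_add
          (mul_le_mul hx (hqy_bdd p) (abs_nonneg _) hs0)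
          (mul_le_mul hy (hqx_bdd p) (abs_nonneg _) hs0)
      _ = 2*(s*C) := by ring
  have t1 : 4*(x^2+y^2)*(x*qx p + y*qy p) ≤ 8*C*s^3 := by
    calc 4*(x^2+y^2)*(x*qx p + y*qy p) ≤ 4*(x^2+y^2)*|x*qx p + y*qy p| :=
          mul_le_mul_of_nonneg_left (le_abs_self _) (by positivity)
      _ ≤ 4*s^2*|x*qx p + y*qy p| :=
          mul_le_mul_of_nonneg_right (by linarith) (abs_nonneg _)
      _ ≤ 4*s^2*(2*(s*C)) := mul_le_mul_of_nonneg_left habs1 (by positivity)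
      _ = 8*C*s^3 := by ring
  have t2 : z*(x*qy p - y*qx p) ≤ 2*C*s^3 := by
    calc z*(x*qy p - y*qx p) ≤ |z*(x*qy p - y*qx p)| := le_abs_self _
      _ = |z| * |x*qy p - y*qx p| := abs_mul _ _
      _ ≤ s^2*(2*(s*C)) := mul_le_mul hz habs2 (abs_nonneg _) (by positivity)
      _ = 2*C*s^3 := by ring
  have e1 : (33/2)*(x^2+y^2) + 4*(x^2+y^2)*(x*qx p + y*qy p) + z*(x*qy p - y*qx p)
      ≤ (33/2)*s^2 + 10*C*s^3 := by linarith
  clear_value x y z V s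
  have hVm : V^m = s^(4*m) := by rw [← hs4, ← pow_mul]
  have hVm1 : V^(m+1) = s^(4*m+4) := by
    rw [← hs4, ← pow_mul, show 4*(m+1) = 4*m+4 by omega]
  have g1 : K*V^m*((33/2)*(x^2+y^2) + 4*(x^2+y^2)*(x*qx p + y*qy p)
        + z*(x*qy p - y*qx p))
      ≤ (33/2)*K*s^(4*m+2) + 10*C*K*s^(4*m+3) := by
    have h1 := mul_le_mul_of_nonneg_left e1
      (mul_nonneg hK0.le (pow_nonneg hV0 m))
    calc K*V^m*((33/2)*(x^2+y^2) + 4*(x^2+y^2)*(x*qx p + y*qy p)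
        + z*(x*qy p - y*qx p))
        ≤ K*V^m*((33/2)*s^2 + 10*C*s^3) := by linarith [h1]
      _ = (33/2)*K*s^(4*m+2) + 10*C*K*s^(4*m+3) := by
          rw [hVm, show 4*m+2 = 4*m+2 from rfl]
          rw [show s^(4*m+2) = s^(4*m)*s^2 by rw [pow_add],
            show s^(4*m+3) = s^(4*m)*s^3 by rw [pow_add]]
          ring
  have g2' : (m:ℝ)*V^(m-1)*(16*(x^2+y^2)^3 + (x^2+y^2)*z^2)
      ≤ 17*(m:ℝ)*s^(4*m+2) := by
    rw [← hs4]
    exact g2_helper m s (x^2+y^2) (z^2) hs0 (by positivity) hr2 hz4 (sq_nonneg z)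
  have g2 : K*((m:ℝ)*V^(m-1))*(16*(x^2+y^2)^3 + (x^2+y^2)*z^2)
      ≤ K*(17*(m:ℝ)*s^(4*m+2)) := by
    have h1 := mul_le_mul_of_nonneg_left g2' hK0.le
    linarith [h1]
  have st1 : a2 * s^(4*m+2) ≤ eps*s^(4*m+3) + a2*(a2/eps)^(4*m+2) := by
    have := step_lemma a2 eps ha2 heps (4*m+2) s hs0
    rwa [show 4*m+2+1 = 4*m+3 by omega] at this
  have st2 : a1 * s^(4*m+3) ≤ (lam*K)*s^(4*m+4) + a1*(a1/(lam*K))^(4*m+3) := by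
    have := step_lemma a1 (lam*K) ha1 (mul_pos hlam hK0) (4*m+3) s hs0
    rwa [show 4*m+3+1 = 4*m+4 by omega] at this
  have hsplit : K*V^m*((33/2)*(x^2+y^2) + 4*(x^2+y^2)*(x*qx p + y*qy p)
        + z*(x*qy p - y*qx p) - 4*lam*((x^2+y^2)^2+z^2))
      = K*V^m*((33/2)*(x^2+y^2) + 4*(x^2+y^2)*(x*qx p + y*qy p)
        + z*(x*qy p - y*qx p)) - 4*lam*K*V^(m+1) := by
    rw [← hVeq, pow_succ]; ring
  rw [hsplit]
  have ha2exp : a2 * s^(4*m+2) = K*(33/2+17*(m:ℝ))*s^(4*m+2) := by rw [ha2def]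
  have ha1exp : a1 * s^(4*m+3) = (10*C*K + eps)*s^(4*m+3) := by rw [ha1def]
  rw [hVm1]
  have c1 : (33/2)*K*s^(4*m+2) + 17*(m:ℝ)*K*s^(4*m+2) = a2*s^(4*m+2) := by
    rw [ha2def]; ring
  have c2 : 10*C*K*s^(4*m+3) + eps*s^(4*m+3) = a1*s^(4*m+3) := by
    rw [ha1def]; ring
  have g2' : K*((m:ℝ)*V^(m-1))*(16*(x^2+y^2)^3 + (x^2+y^2)*z^2)
      ≤ 17*(m:ℝ)*K*s^(4*m+2) := by linarith [g2]
  have big : K*V^m*((33/2)*(x^2+y^2) + 4*(x^2+y^2)*(x*qx p + y*qy p)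
        + z*(x*qy p - y*qx p))
      + K*((m:ℝ)*V^(m-1))*(16*(x^2+y^2)^3 + (x^2+y^2)*z^2)
      ≤ (lam*K)*s^(4*m+4)
        + (a2*(a2/eps)^(4*m+2) + a1*(a1/(lam*K))^(4*m+3)) := by
    linarith [g1, g2', st1, st2, c1, c2]
  linarith [big]

theorem lyapunov_bound_V_pow
    (qx qy : (Fin 3 → ℝ) → ℝ) (hqx : ContDiff ℝ (⊤ : ℕ∞) qx) (hqy : ContDiff ℝ (⊤ : ℕ∞) qy)
    (C : ℝ) (hqx_bdd : ∀ p, |qx p| ≤ C) (hqy_bdd : ∀ p, |qy p| ≤ C)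
    (lam : ℝ) (hlam : 0 < lam) (k : ℕ) (hk : 1 ≤ k) :
    ∃ c > (0 : ℝ), ∃ C₁ > (0 : ℝ),
      (∀ p : Fin 3 → ℝ,
        Lop qx qy lam (fun q => Vfun q ^ k) p ≤ -c * Vfun p ^ k + C₁) ∧
      Filter.Tendsto
        (fun p : Fin 3 → ℝ =>
          Lop qx qy lam (fun q => Vfun q ^ k) p + c * Vfun p ^ k)
        (Filter.comap norm Filter.atTop) Filter.atBot := by
  obtain ⟨m, rfl⟩ : ∃ m, k = m + 1 := ⟨k - 1, (Nat.succ_pred_eq_of_pos hk).symm⟩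
  obtain ⟨B, hB0, key⟩ := key_bound qx qy C hqx_bdd hqy_bdd lam hlam m
  have hK0 : (0:ℝ) < (m:ℝ)+1 := by positivity
  have hV0 : ∀ p : Fin 3 → ℝ, (0:ℝ) ≤ Vfun p := by
    intro p
    rw [show Vfun p = (p 0^2+p 1^2)^2+p 2^2 from rfl]
    positivity
  refine ⟨2*lam*((m:ℝ)+1), by positivity, B+1, by linarith, ?_, ?_⟩
  · intro p
    have h1 := key p
    have h2 : (0:ℝ) ≤ Vfun p ^ (m+1) := pow_nonneg (hV0 p) _
    have h3 : (0:ℝ) ≤ lam*((m:ℝ)+1)*Vfun p^(m+1) :=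
      mul_nonneg (mul_nonneg hlam.le hK0.le) h2
    linarith [h1, h3]
  · have key2 : ∀ p : Fin 3 → ℝ,
        Lop qx qy lam (fun q => Vfun q ^ (m+1)) p + 2*lam*((m:ℝ)+1) * Vfun p ^ (m+1)
        ≤ -(2*lam*((m:ℝ)+1)/9)*‖p‖^2 + (lam*((m:ℝ)+1)*(4/3) + B) := by
      intro p
      have h1 := key p
      have hpow : Vfun p - 1 ≤ Vfun p ^ (m+1) := by
        rcases le_or_gt (Vfun p) 1 with h|h
        · have := pow_nonneg (hV0 p) (m+1); linarith
        · have := le_self_pow₀ h.le (by omega : m + 1 ≠ 0); linarith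
      have hlow := Vfun_lower p
      have h2 : lam*((m:ℝ)+1)*(Vfun p - 1) ≤ lam*((m:ℝ)+1)*Vfun p^(m+1) :=
        mul_le_mul_of_nonneg_left hpow (by positivity)
      have h3 : lam*((m:ℝ)+1)*((2*‖p‖^2-3)/9) ≤ lam*((m:ℝ)+1)*Vfun p :=
        mul_le_mul_of_nonneg_left hlow (by positivity)
      linarith [h1, h2, h3]
    refine Filter.tendsto_atBot_mono' _ (Filter.Eventually.of_forall key2) ?_
    have hcomp : Filter.Tendsto (fun p : Fin 3 → ℝ => ‖p‖)
        (Filter.comap norm Filter.atTop) Filter.atTop := Filter.tendsto_comap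
    have hsq : Filter.Tendsto (fun p : Fin 3 → ℝ => ‖p‖^2)
        (Filter.comap norm Filter.atTop) Filter.atTop := by
      simpa [pow_two] using hcomp.atTop_mul_atTop₀ hcomp
    have hltz : -(2*lam*((m:ℝ)+1)/9) < 0 := by
      have : (0:ℝ) < 2*lam*((m:ℝ)+1)/9 := by positivity
      linarith
    have hneg : Filter.Tendsto (fun p : Fin 3 → ℝ => -(2*lam*((m:ℝ)+1)/9)*‖p‖^2)
        (Filter.comap norm Filter.atTop) Filter.atBot :=
      (Filter.tendsto_const_mul_atBot_of_neg hltz).2 hsq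
    exact Filter.tendsto_atBot_add_const_right _ _ hneg
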